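/- Interaction of an active braid B with a passive braid B' yields a braid B'' whose effective twist is the sum Θ_{B''} = Θ_B + Θ_{B'}, i.e., Θ is additively conserved under interaction. -/

import Mathlib

namespace BraidQG

/-- Generators of the braid group `B₃`: `true ↦ u`, `false ↦ d`. -/
abbrev Gen := Bool

/-- Crossing sequences, viewed as elements of the free group on `u, d`. -/
abbrev Word := FreeGroup Gen

/-- The upper crossing generator `u`. -/
def u : Word := FreeGroup.of true

/-- The lower crossing generator `d`. -/
def d : Word := FreeGroup.of false

/-- Node states are `Bool`: `true ↦ +`, `false ↦ −`.  `negPow m S = (−)^m S`. -/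
def negPow (m : ℤ) (S : Bool) : Bool := if Even m then S else !S

/-- The sign value of a state, in `{1, −1}`. -/
def sgn (S : Bool) : ℤ := if S then 1 else -1

/-- The rotation word `X_l(S, m)`:
`X_l(+,m) = (ud)^(−m/2)` (`m` even), `d(ud)^((−1−m)/2)` (`m` odd);
`X_l(−,m) = (du)^(−m/2)` (`m` even), `u(du)^((−1−m)/2)` (`m` odd). -/
def Xl (S : Bool) (m : ℤ) : Word :=
  if Even m then (if S then u * d else d * u) ^ (-(m / 2))
  else (if S then d else u) * (if S then u * d else d * u) ^ ((-1 - m) / 2)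

/-- The rotation word `X_r(S, n)`:
`X_r(+,n) = (ud)^(−n/2)` (`n` even), `(ud)^((1−n)/2) d⁻¹` (`n` odd);
`X_r(−,n) = (du)^(−n/2)` (`n` even), `(du)^((1−n)/2) u⁻¹` (`n` odd). -/
def Xr (S : Bool) (n : ℤ) : Word :=
  if Even n then (if S then u * d else d * u) ^ (-(n / 2))
  else (if S then u * d else d * u) ^ ((1 - n) / 2) * (if S then d else u)⁻¹

/-- The number of crossings of a crossing sequence: the length of the (reduced) word. -/
def len (X : Word) : ℕ := X.toWord.length

/-- The sum of crossing numbers of a word: `u, d` count `+1`, `u⁻¹, d⁻¹` count `−1`. -/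
def crossSum (X : Word) : ℤ := (X.toWord.map (fun p => if p.2 then (1 : ℤ) else -1)).sum

/-- The transposition `(1 2)` on strand positions `{1,2,3} ≅ {0,1,2}`. -/
def c12 : Equiv.Perm (Fin 3) := Equiv.swap 0 1

/-- The transposition `(2 3)` on strand positions. -/
def c23 : Equiv.Perm (Fin 3) := Equiv.swap 1 2

/-- One `π/3`-rotation step acting on pairs (state, permutation accumulated so far):
`step (S, p) = ((−)S, P^S₁ * p)` with `P⁺₁ = (1 2)` and `P⁻₁ = (2 3)`. -/
def step : Equiv.Perm (Bool × Equiv.Perm (Fin 3)) where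
  toFun x := (!x.1, (if x.1 then c12 else c23) * x.2)
  invFun x := (!x.1, (if !x.1 then c12 else c23) * x.2)
  left_inv := by
    rintro ⟨b, p⟩
    cases b <;> simp [c12, c23, ← mul_assoc, Equiv.swap_mul_self]
  right_inv := by
    rintro ⟨b, p⟩
    cases b <;> simp [c12, c23, ← mul_assoc, Equiv.swap_mul_self]

/-- The rotation permutation `P^S_m ∈ S₃`, defined by the recursion
`P^S_0 = 1`, `P^S_{m+1} = P^{(−)^m S}_1 * P^S_m` (and the corresponding downward
recursion), realized as the `m`-th power of the single rotation step. -/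
def P (S : Bool) (m : ℤ) : Equiv.Perm (Fin 3) := ((step ^ m) (S, 1)).2

/-- A braid (diagram) as the `8`-tuple `(T_l, S_l, (T_a,T_b,T_c), X, S_r, T_r)`;
the internal-twist triple is a function `Fin 3 → ℤ`. -/
structure Braid where
  Tl : ℤ
  Sl : Bool
  T : Fin 3 → ℤ
  X : Word
  Sr : Bool
  Tr : ℤ

/-- The general rotation `R_{m,n}` on braids. -/
def rotate (m n : ℤ) (B : Braid) : Braid where
  Tl := B.Tl + m
  Sl := negPow m B.Sl
  T := fun i => B.T (P B.Sl m i) - m - n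
  X := Xl B.Sl m * B.X * Xr B.Sr n
  Sr := negPow n B.Sr
  Tr := B.Tr + n

/-- The effective twist number `Θ = T_l + T_r + (T_a + T_b + T_c) − 2 Σᵢ xᵢ`. -/
def Θ (B : Braid) : ℤ :=
  B.Tl + B.Tr + (B.T 0 + B.T 1 + B.T 2) - 2 * crossSum B.X

/-- The effective state `χ = (−1)^{|X|} S_l S_r ∈ {1, −1}`. -/
def χ (B : Braid) : ℤ := (-1) ^ len B.X * sgn B.Sl * sgn B.Sr

/-- `Reachable A B`: `B` is obtained from `A` by some finite sequence of rotations. -/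
def Reachable : Braid → Braid → Prop :=
  Relation.ReflTransGen (fun A B => ∃ m n : ℤ, B = rotate m n A)

/-- A braid is actively-interacting iff it can be rotated to a trivial braid diagram
(empty crossing sequence, equal end-node states). -/
def Active (B : Braid) : Prop :=
  ∃ B', Reachable B B' ∧ B'.X = 1 ∧ B'.Sl = B'.Sr

/-- The defining braid relation `udu = dud` of `B₃`. -/
def braidRel : Set (FreeGroup Gen) := {u * d * u * (d * u * d)⁻¹}

/-- The braid group `B₃ = ⟨u, d ∣ udu = dud⟩`. -/
abbrev B3 := PresentedGroup braidRel

/-- The canonical projection of crossing sequences into `B₃`. -/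
def pr : FreeGroup Gen →* B3 := FreeGroup.lift fun b => PresentedGroup.of b

/-- The generator `u` of `B₃`. -/
def bu : B3 := PresentedGroup.of true

/-- The generator `d` of `B₃`. -/
def bd : B3 := PresentedGroup.of false

/-- The bar map swapping `u ↔ d` (and `u⁻¹ ↔ d⁻¹`) letterwise. -/
def bar : Word →* Word := FreeGroup.map Bool.not

/-- The simultaneous rotation `R_{3k,−3k}` on braids: external twists shift by `±3k`,
states flip by `(−1)^k`, the triple is permuted by `(1 3)^k`, and the letter
swap `u ↔ d` is applied to `X` exactly when `k` is odd. -/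
def rot3k (k : ℤ) (B : Braid) : Braid where
  Tl := B.Tl + 3 * k
  Sl := negPow k B.Sl
  T := fun i => B.T (((Equiv.swap 0 2 : Equiv.Perm (Fin 3)) ^ k) i)
  X := if Even k then B.X else bar B.X
  Sr := negPow k B.Sr
  Tr := B.Tr - 3 * k

/-- The interaction `B + B'` of an active braid `B` (trivial representative)
onto a passive braid `B'` (zero-external-twist representative), from the left. -/
def interact (B B' : Braid) : Braid where
  Tl := 0
  Sl := negPow B.Tl B.Sl
  T := fun i =>
    B.T (P B.Sl (-B.Tl) i) + B'.T (P (negPow B.Tr B.Sl) (-B.Tl - B.Tr) i)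
      + (B.Tl + B.Tr)
  X := Xl (negPow B.Tr B.Sl) (-B.Tl - B.Tr) * B'.X
  Sr := B'.Sr
  Tr := 0

/-- The permutation `σ_X ∈ S₃` induced by a crossing sequence `X`
(`u` induces `(1 2)`, `d` induces `(2 3)`). -/
def σX : Word →* Equiv.Perm (Fin 3) := FreeGroup.lift fun b => if b then c12 else c23

/-- The interaction `B' + B` of an active braid `B` (with `T_r = 0`, rotated to its
right-twist-only trivial representative) onto a passive braid `B'` from the right. -/
def interactR (B' B : Braid) : Braid where
  Tl := 0
  Sl := B'.Sl
  T := fun i => (B'.T i + B.Tl) + B.T (P B.Sl (-B.Tl) ((σX B'.X)⁻¹ i))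
  X := B'.X * Xr B'.Sr (-B.Tl)
  Sr := B'.Sl
  Tr := 0

/-! In `B''` both internal triples reappear only permuted by elements of `S₃`, so their
sums survive. What is new is `T_l + T_r` added to each of the three strands and the prefix
`X_l(_, -T_l - T_r)` of exponent sum `T_l + T_r`; the net `3 (T_l + T_r) - 2 (T_l + T_r)` is
exactly the external twist that `B` carried and `B''` no longer does. -/

theorem sum_three_comp_perm {M : Type*} [AddCommMonoid M] (p : Equiv.Perm (Fin 3))
    (T : Fin 3 → M) : T (p 0) + T (p 1) + T (p 2) = T 0 + T 1 + T 2 := by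
  simpa only [Fin.sum_univ_three] using Equiv.sum_comp p T

def exponentSum : Word →* Multiplicative ℤ :=
  FreeGroup.lift fun _ => Multiplicative.ofAdd 1

theorem crossSum_eq_toAdd_exponentSum (X : Word) :
    crossSum X = (exponentSum X).toAdd := by
  conv_rhs => rw [← FreeGroup.mk_toWord (x := X)]
  rw [crossSum, exponentSum, FreeGroup.lift_mk]
  induction X.toWord with
  | nil => rfl
  | cons a L ih =>
    rcases a with ⟨a, _ | _⟩ <;> simp [ih]

theorem crossSum_mul (X Y : Word) : crossSum (X * Y) = crossSum X + crossSum Y := by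
  simp only [crossSum_eq_toAdd_exponentSum, map_mul, toAdd_mul]

theorem crossSum_zpow (X : Word) (n : ℤ) : crossSum (X ^ n) = n * crossSum X := by
  simp only [crossSum_eq_toAdd_exponentSum, map_zpow, toAdd_zpow, smul_eq_mul]

theorem crossSum_one : crossSum 1 = 0 := rfl

theorem crossSum_of (b : Gen) : crossSum (FreeGroup.of b) = 1 := by
  simp [crossSum_eq_toAdd_exponentSum, exponentSum]

theorem crossSum_u : crossSum u = 1 := crossSum_of true

theorem crossSum_d : crossSum d = 1 := crossSum_of false

theorem crossSum_Xl (S : Bool) (m : ℤ) : crossSum (Xl S m) = -m := by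
  have hletter : crossSum (if S then d else u) = 1 := by
    cases S <;> simp [crossSum_u, crossSum_d]
  have hpair : crossSum (if S then u * d else d * u) = 2 := by
    cases S <;> simp [crossSum_mul, crossSum_u, crossSum_d]
  by_cases hm : Even m
  · rw [Xl, if_pos hm, crossSum_zpow, hpair]
    obtain ⟨k, rfl⟩ := hm
    omega
  · rw [Xl, if_neg hm, crossSum_mul, crossSum_zpow, hletter, hpair]
    obtain ⟨k, rfl⟩ := Int.not_even_iff_odd.mp hm
    omega

theorem theta_additive_under_interaction_general (B B' : Braid)
    (hX : B.X = 1)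
    (hl : B'.Tl = 0) (hr : B'.Tr = 0) :
    Θ (interact B B') = Θ B + Θ B' := by
  have hB := sum_three_comp_perm (P B.Sl (-B.Tl)) B.T
  have hB' := sum_three_comp_perm (P (negPow B.Tr B.Sl) (-B.Tl - B.Tr)) B'.T
  simp only [Θ, interact, crossSum_mul, crossSum_Xl, hX, crossSum_one, hl, hr]
  linarith

/-- interaction of an active braid `B` (trivial representative:
empty crossing word, equal end-node states) with a passive braid `B'` (zero
external twists), under the interaction condition `(−1)^{T_r} S = S_l`,
yields `B'' = B + B'` with `Θ_{B''} = Θ_B + Θ_{B'}`. -/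
theorem theta_additive_under_interaction (B B' : Braid)
    (hX : B.X = 1) (hS : B.Sl = B.Sr)
    (hl : B'.Tl = 0) (hr : B'.Tr = 0)
    (hcond : negPow B.Tr B.Sl = B'.Sl) :
    Θ (interact B B') = Θ B + Θ B' :=
  theta_additive_under_interaction_general B B' hX hl hr

end BraidQG
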